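/- arXiv:1209.3585 — 2 statements merged into one kernel-verified Lean document; each statement's English description precedes it below -/
import Mathlib

section
/- For a prime p, the sum over all compositions (t_1,...,t_r) of m of the product Π_{i=1}^r φ(p^{t_i}) equals (p-1)·(2p-1)^(m-1), where φ is Euler's totient function. -/
open Finset

lemma totient_prod_blocks (p q : ℕ) (hp : p.Prime) (hq : p - 1 = q) :
    ∀ l : List ℕ, (∀ t ∈ l, 0 < t) →
      (l.map fun t => Nat.totient (p ^ t)).prod = q ^ l.length * p ^ (l.sum - l.length)
  | [], _ => by simp
  | t :: l, h => by
      have ht : 0 < t := h t (by simp)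
      have hl : ∀ t ∈ l, 0 < t := fun u hu => h u (by simp [hu])
      have hlen : l.length ≤ l.sum := List.length_le_sum_of_one_le _ hl
      rw [List.map_cons, List.prod_cons, totient_prod_blocks p q hp hq l hl,
        Nat.totient_prime_pow hp ht, List.length_cons, List.sum_cons]
      have h1 : t + l.sum - (l.length + 1) = (t - 1) + (l.sum - l.length) := by omega
      rw [h1, pow_add, pow_succ, hq]
      ring

def bmap (n : ℕ) (i : Fin n) : Fin (n + 2) := ⟨1 + (i : ℕ), by omega⟩

lemma card_compositionAsSetEquiv (n : ℕ) (d : CompositionAsSet (n + 1)) :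
    (compositionAsSetEquiv (n + 1) d).card + 2 = d.boundaries.card := by
  set A : Finset (Fin n) := compositionAsSetEquiv (n + 1) d with hA
  have hmem : ∀ i : Fin n, i ∈ A ↔ bmap n i ∈ d.boundaries := by
    intro i
    rw [hA]
    simp [compositionAsSetEquiv, bmap]
  have hinj : Function.Injective (bmap n) := by
    intro a b hab
    simp only [bmap, Fin.mk.injEq] at hab
    exact Fin.ext (by omega)
  have hbd : d.boundaries = insert 0 (insert (Fin.last (n + 1)) (A.image (bmap n))) := by
    ext b
    simp only [Finset.mem_insert, Finset.mem_image]
    constructor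
    · intro hb
      by_cases h0 : b = 0
      · exact Or.inl h0
      · by_cases hlast : b = Fin.last (n + 1)
        · exact Or.inr (Or.inl hlast)
        · refine Or.inr (Or.inr ?_)
          have hb0 : (b : ℕ) ≠ 0 := fun h => h0 (Fin.ext h)
          have hbl : (b : ℕ) ≠ n + 1 := fun h => hlast (Fin.ext (by simp [h]))
          have hblt : (b : ℕ) < n + 2 := b.isLt
          have hib : bmap n ⟨(b : ℕ) - 1, by omega⟩ = b := Fin.ext (by simp [bmap]; omega)
          exact ⟨_, (hmem _).mpr (by rw [hib]; exact hb), hib⟩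
    · rintro (rfl | rfl | ⟨i, hi, rfl⟩)
      · exact d.zero_mem
      · exact d.getLast_mem
      · exact (hmem i).mp hi
  rw [hbd]
  have h0last : (0 : Fin (n + 2)) ≠ Fin.last (n + 1) := by
    simp [Fin.ext_iff]
  have h0img : (0 : Fin (n + 2)) ∉ A.image (bmap n) := by
    simp only [Finset.mem_image]
    rintro ⟨i, -, hi⟩
    have := congrArg Fin.val hi
    simp [bmap] at this
  have hlimg : Fin.last (n + 1) ∉ A.image (bmap n) := by
    simp only [Finset.mem_image]
    rintro ⟨i, -, hi⟩
    have := congrArg Fin.val hi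
    simp only [bmap, Fin.val_last] at this
    omega
  rw [Finset.card_insert_of_notMem (by simp [h0last, h0img]),
    Finset.card_insert_of_notMem hlimg, Finset.card_image_of_injective _ hinj]

lemma composition_length_eq (n : ℕ) (c : Composition (n + 1)) :
    c.length = (compositionAsSetEquiv (n + 1) (compositionEquiv (n + 1) c)).card + 1 := by
  have h1 := card_compositionAsSetEquiv n (compositionEquiv (n + 1) c)
  have h2 : (compositionEquiv (n + 1) c).boundaries.card
      = (compositionEquiv (n + 1) c).length + 1 := by
    have := (compositionEquiv (n + 1) c).card_boundaries_pos
    simp [CompositionAsSet.length]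
    omega
  have h3 : (compositionEquiv (n + 1) c).length = c.length := by
    simpa [compositionEquiv] using c.toCompositionAsSet_length
  omega

theorem sum_over_compositions_totient (p m : ℕ) (hp : p.Prime) (hm : 0 < m) :
    ∑ c : Composition m, (c.blocks.map fun t => Nat.totient (p ^ t)).prod =
      (p - 1) * (2 * p - 1) ^ (m - 1) := by
  obtain ⟨n, rfl⟩ : ∃ n, m = n + 1 := ⟨m - 1, by omega⟩
  set q := p - 1 with hq
  have hp2 : 2 ≤ p := hp.two_le
  have hpq : p = q + 1 := by omega
  have step1 : ∀ c : Composition (n + 1),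
      (c.blocks.map fun t => Nat.totient (p ^ t)).prod
        = q ^ (c.length) * p ^ (n + 1 - c.length) := by
    intro c
    rw [totient_prod_blocks p q hp rfl c.blocks (fun t ht => c.blocks_pos ht)]
    rw [c.blocks_sum]
  calc ∑ c : Composition (n + 1), (c.blocks.map fun t => Nat.totient (p ^ t)).prod
      = ∑ c : Composition (n + 1), q ^ c.length * p ^ (n + 1 - c.length) := by
        exact Finset.sum_congr rfl fun c _ => step1 c
    _ = ∑ s : Finset (Fin n), q ^ (s.card + 1) * p ^ (n + 1 - (s.card + 1)) := by
        refine Fintype.sum_equiv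
          ((compositionEquiv (n + 1)).trans (compositionAsSetEquiv (n + 1))) _ _ ?_
        intro c
        rw [composition_length_eq n c]
        rfl
    _ = q * ∑ s : Finset (Fin n), q ^ s.card * p ^ (n - s.card) := by
        rw [Finset.mul_sum]
        refine Finset.sum_congr rfl fun s _ => ?_
        have : n + 1 - (s.card + 1) = n - s.card := by omega
        rw [this, pow_succ]
        ring
    _ = q * (q + p) ^ n := by
        congr 1
        have := Finset.prod_add (fun _ : Fin n => q) (fun _ : Fin n => p) Finset.univ
        simp only [Finset.prod_const, Finset.card_univ, Fintype.card_fin] at this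
        rw [this, ← Finset.powerset_univ]
        refine Finset.sum_congr rfl fun s hs => ?_
        rw [Finset.card_sdiff_of_subset (Finset.mem_powerset.mp hs),
          Finset.card_univ, Fintype.card_fin]
    _ = (p - 1) * (2 * p - 1) ^ (n + 1 - 1) := by
        have : q + p = 2 * p - 1 := by omega
        rw [this]
        simp [hq]
end

section
/- For an integer b ≥ 2 with prime factorization b = Π p_i^{α_i}, the sum over all compositions (t_1,...,t_r) of m of the product Π_{i=1}^r φ(b^{t_i}) equals b^m · C_b · (1 + C_b)^{m-1}, where C_b = Π (1 - 1/p_i) = φ(b)/b. -/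
/-!
For `t ≥ 1` the numbers `b ^ t` and `b` have the same prime factors, so Euler's product gives
`φ (b ^ t) = b ^ t * C`, and a composition of `m` into `r` parts contributes `b ^ m * C ^ r`.
Compositions of `m` into `r` parts correspond to the `(r - 1)`-subsets of the `m - 1` interior
cut points, so summing `C ^ r` over them gives `C * (1 + C) ^ (m - 1)` by the binomial theorem.
-/

open Nat

theorem Nat.cast_totient_pow_of_ne_zero (b : ℕ) {t : ℕ} (ht : t ≠ 0) :
    (φ (b ^ t) : ℚ) = b ^ t * (φ b / b) := by
  rcases eq_or_ne b 0 with rfl | hb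
  · simp [zero_pow ht]
  rw [totient_eq_mul_prod_factors, totient_eq_mul_prod_factors, primeFactors_pow b ht]
  push_cast
  field_simp

theorem List.prod_map_pow_mul {M : Type*} [CommMonoid M] (a x : M) (l : List ℕ) :
    (l.map fun t => a ^ t * x).prod = a ^ l.sum * x ^ l.length := by
  induction l with
  | nil => simp
  | cons t l ih =>
    rw [map_cons, prod_cons, ih, sum_cons, length_cons, pow_add, pow_succ]
    ac_rfl

theorem Composition.cast_prod_map_totient_pow {n : ℕ} (b : ℕ) (c : Composition n) :
    ((c.blocks.map fun t => φ (b ^ t)).prod : ℚ) = b ^ n * (φ b / b) ^ c.length := by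
  calc ((c.blocks.map fun t => φ (b ^ t)).prod : ℚ)
      = (c.blocks.map fun t => (b : ℚ) ^ t * (φ b / b)).prod := by
        rw [Nat.cast_list_prod, List.map_map]
        exact congrArg List.prod <| List.map_congr_left fun t ht =>
          cast_totient_pow_of_ne_zero b (c.blocks_pos ht).ne'
    _ = b ^ n * (φ b / b) ^ c.length := by
        rw [List.prod_map_pow_mul, c.blocks_sum, Composition.length]

theorem CompositionAsSet.length_compositionAsSetEquiv_symm {n : ℕ} (hn : 0 < n)
    (s : Finset (Fin (n - 1))) : ((compositionAsSetEquiv n).symm s).length = s.card + 1 := by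
  let shift : Fin (n - 1) ↪ Fin (n + 1) :=
    ⟨fun j => ⟨j + 1, by omega⟩, fun i j h => by simpa [Fin.ext_iff] using h⟩
  have hshift (j : Fin (n - 1)) : (shift j : ℕ) = j + 1 := rfl
  have hboundaries : ((compositionAsSetEquiv n).symm s).boundaries =
      insert 0 (insert (Fin.last n) (s.map shift)) := by
    ext i
    simp only [compositionAsSetEquiv, Equiv.coe_fn_symm_mk, Set.toFinset_ofPred,
      Finset.mem_filter_univ, Finset.mem_insert, Finset.mem_map, exists_prop, Fin.ext_iff, hshift]
    exact or_congr_right (or_congr_right (exists_congr fun j => and_congr_right fun _ => eq_comm))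
  have hlast : Fin.last n ∉ s.map shift := by
    simp only [Finset.mem_map, Fin.ext_iff, hshift, Fin.val_last, not_exists, not_and]
    omega
  have hzero : (0 : Fin (n + 1)) ∉ insert (Fin.last n) (s.map shift) := by
    simp only [Finset.mem_insert, Finset.mem_map, Fin.ext_iff, hshift, Fin.val_last, Fin.val_zero]
    omega
  rw [CompositionAsSet.length, hboundaries, Finset.card_insert_of_notMem hzero,
    Finset.card_insert_of_notMem hlast, Finset.card_map, Nat.add_sub_cancel]

theorem Composition.sum_pow_length {R : Type*} [CommSemiring R] {n : ℕ} (hn : 0 < n) (x : R) :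
    ∑ c : Composition n, x ^ c.length = x * (1 + x) ^ (n - 1) := by
  rw [← ((compositionEquiv n).trans (compositionAsSetEquiv n)).symm.sum_comp]
  have hsubsets : ∑ s : Finset (Fin (n - 1)), x ^ s.card = (1 + x) ^ (n - 1) := by
    simpa [add_comm] using Fin.sum_pow_mul_eq_add_pow x (1 : R)
  simp only [Equiv.symm_trans_apply, compositionEquiv, Equiv.coe_fn_symm_mk,
    CompositionAsSet.toComposition_length,
    CompositionAsSet.length_compositionAsSetEquiv_symm hn, pow_succ, ← Finset.sum_mul, hsubsets]
  ring

theorem sum_over_compositions_totient_base_b_general (b m : ℕ) (hm : 0 < m)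
    (C : ℚ) (hC : C = (b.totient : ℚ) / b) :
    (∑ c : Composition m, ((c.blocks.map fun t => Nat.totient (b ^ t)).prod : ℚ)) =
      (b : ℚ) ^ m * C * (1 + C) ^ (m - 1) := by
  simp only [Composition.cast_prod_map_totient_pow, ← Finset.mul_sum,
    Composition.sum_pow_length hm, hC]
  ring

theorem sum_over_compositions_totient_base_b (b m : ℕ) (hb : 2 ≤ b) (hm : 0 < m)
    (C : ℚ) (hC : C = (b.totient : ℚ) / b) :
    (∑ c : Composition m, ((c.blocks.map fun t => Nat.totient (b ^ t)).prod : ℚ)) =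
      (b : ℚ) ^ m * C * (1 + C) ^ (m - 1) :=
  sum_over_compositions_totient_base_b_general b m hm C hC
end
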